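/- Let V be a complex line bundle over U and θ : U → V' a partial automorphism of X, with E = Γ_0(V,θ) the associated C*-correspondence over C_0(X). Then ξ⟨η,ζ⟩ = ζ⟨η,ξ⟩ for all ξ,η,ζ ∈ E; consequently E is a Hilbert C_0(X)-bimodule with left inner product _E⟨ξ,η⟩ = ⟨η,ξ⟩∘θ^{-1}. -/
import Mathlib


open Bundle Filter
open scoped ZeroAtInfty Classical

/-- The geometric data of a partial automorphism twisted by a vector bundle: a partial
homeomorphism `θ = e : U → V` between open subsets of `X` together with a hermitian complex
vector bundle `(Fib, β)` over `U = e.source` (with model fiber `F`, of dimension at least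
one). -/
structure PASetup (X : Type*) [TopologicalSpace X] where
  e : PartialHomeomorph X X
  F : Type*
  [nF : NormedAddCommGroup F]
  [nsF : NormedSpace ℂ F]
  [ntF : Nontrivial F]
  Fib : e.source → Type*
  [ag : ∀ u : e.source, AddCommGroup (Fib u)]
  [mo : ∀ u : e.source, Module ℂ (Fib u)]
  [tp : ∀ u : e.source, TopologicalSpace (Fib u)]
  [tt : TopologicalSpace (Bundle.TotalSpace F Fib)]
  [fb : FiberBundle F Fib]
  [vb : VectorBundle ℂ F Fib]
  β : ∀ u : e.source, Fib u → Fib u → ℂ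
  conj_symm : ∀ u v w, β u v w = starRingEnd ℂ (β u w v)
  add_right : ∀ u v w₁ w₂, β u v (w₁ + w₂) = β u v w₁ + β u v w₂
  smul_right : ∀ u (c : ℂ) v w, β u v (c • w) = c * β u v w
  pos_def : ∀ u v, v ≠ 0 → 0 < (β u v v).re
  cont_metric : Continuous
    (fun p : Bundle.TotalSpace (F × F) (Fib ×ᵇ Fib) => β p.proj p.snd.1 p.snd.2)

attribute [instance] PASetup.nF PASetup.nsF PASetup.ntF PASetup.ag PASetup.mo PASetup.tp
  PASetup.tt PASetup.fb PASetup.vb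

namespace PASetup

variable {X : Type*} [TopologicalSpace X] (P : PASetup X)

/-- The sections of `Γ₀(V)`: continuous sections of the bundle over `U` vanishing at
infinity (of `U`). -/
def Sec : Set (∀ u : P.e.source, P.Fib u) :=
  {s | Continuous (fun u : P.e.source =>
      (Bundle.TotalSpace.mk u (s u) : Bundle.TotalSpace P.F P.Fib)) ∧
    Tendsto (fun u : P.e.source => Real.sqrt (P.β u (s u) (s u)).re)
      (cocompact P.e.source) (nhds 0)}

/-- The `C₀(X)`-valued inner product `⟨s,t⟩(x) = β(s x, t x)` (extended by `0` off `U`). -/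
noncomputable def innX (s t : ∀ u : P.e.source, P.Fib u) : X → ℂ :=
  fun x => if h : x ∈ P.e.source then P.β ⟨x, h⟩ (s ⟨x, h⟩) (t ⟨x, h⟩) else 0

/-- Right multiplication `s·f` by a function on `X`. -/
def rmul (s : ∀ u : P.e.source, P.Fib u) (f : X → ℂ) : ∀ u : P.e.source, P.Fib u :=
  fun u => f (u : X) • s u

/-- The left action `φ(f) s = s·(f ∘ θ)`. -/
def lact (f : X → ℂ) (s : ∀ u : P.e.source, P.Fib u) : ∀ u : P.e.source, P.Fib u :=
  fun u => f (P.e (u : X)) • s u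

/-- The sup-norm of a section, induced by the metric. -/
noncomputable def snorm (s : ∀ u : P.e.source, P.Fib u) : ℝ :=
  ⨆ u : P.e.source, Real.sqrt (P.β u (s u) (s u)).re

/-- The rank-one operator `θ_{ξ,η} : ζ ↦ ξ·⟨η,ζ⟩`. -/
def rank1 (ξ η ζ : ∀ u : P.e.source, P.Fib u) : ∀ u : P.e.source, P.Fib u :=
  fun u => P.β u (η u) (ζ u) • ξ u

/-- Membership of an operator in `K(E)`: operator-norm approximability by finite sums of
rank-one operators `θ_{ξ,η}` with `ξ, η ∈ Γ₀(V)`. -/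
def InKE (T : (∀ u : P.e.source, P.Fib u) → ∀ u : P.e.source, P.Fib u) : Prop :=
  ∀ ε : ℝ, 0 < ε → ∃ (N : ℕ) (ξs ηs : Fin N → ∀ u : P.e.source, P.Fib u),
    (∀ i, ξs i ∈ P.Sec ∧ ηs i ∈ P.Sec) ∧
    ∀ ζ ∈ P.Sec, P.snorm (fun u => T ζ u - ∑ i, P.rank1 (ξs i) (ηs i) ζ u) ≤ ε * P.snorm ζ

end PASetup

theorem stmt12_aux_key {X : Type*} [TopologicalSpace X] (P : PASetup X)
    (hline : ∀ u : P.e.source, Module.finrank ℂ (P.Fib u) = 1)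
    (ξ η ζ : ∀ u : P.e.source, P.Fib u) (u : P.e.source) :
    P.β u (η u) (ζ u) • ξ u = P.β u (η u) (ξ u) • ζ u := by
  have hz : ∀ v : P.Fib u, P.β u v 0 = 0 := by
    intro v
    have h := P.add_right u v 0 0
    simpa using h
  by_cases hξ : ξ u = 0
  · simp [hξ, hz]
  · obtain ⟨c, hc⟩ := (finrank_eq_one_iff_of_nonzero' (ξ u) hξ).mp (hline u) (ζ u)
    rw [← hc, P.smul_right, smul_smul, mul_comm, ← smul_smul]

/-- Let `V` be a complex line bundle over `U` and `θ : U → V'` a partial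
automorphism of `X`, with `E = Γ₀(V,θ)` the associated C*-correspondence over `C₀(X)`.
Then `ξ⟨η,ζ⟩ = ζ⟨η,ξ⟩` for all `ξ, η, ζ ∈ E`; consequently `E` is a Hilbert
`C₀(X)`-bimodule with left inner product `_E⟨ξ,η⟩ = ⟨η,ξ⟩ ∘ θ⁻¹`, i.e. the left action of
`_E⟨ξ,η⟩` on `ζ` is the rank-one operator `θ_{ξ,η}` applied to `ζ`. -/
theorem stmt12_line_bundle_gives_bimodule
    {X : Type*} [TopologicalSpace X] [T2Space X] [LocallyCompactSpace X]
    [SecondCountableTopology X]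
    (P : PASetup X)
    -- `V` is a line bundle: all fibers are one-dimensional:
    (hline : ∀ u : P.e.source, Module.finrank ℂ (P.Fib u) = 1) :
    -- `ξ⟨η,ζ⟩ = ζ⟨η,ξ⟩`:
    (∀ ξ ∈ P.Sec, ∀ η ∈ P.Sec, ∀ ζ ∈ P.Sec, ∀ u : P.e.source,
      P.β u (η u) (ζ u) • ξ u = P.β u (η u) (ξ u) • ζ u) ∧
    -- the bimodule identity `φ_E(_E⟨ξ,η⟩) ζ = ξ⟨η,ζ⟩_E`, with `_E⟨ξ,η⟩ = ⟨η,ξ⟩ ∘ θ⁻¹`: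
    (∀ ξ ∈ P.Sec, ∀ η ∈ P.Sec, ∀ ζ ∈ P.Sec, ∀ u : P.e.source,
      P.lact (fun x => if x ∈ P.e.target then P.innX η ξ (P.e.symm x) else 0) ζ u
        = P.rank1 ξ η ζ u) := by
  refine ⟨fun ξ _ η _ ζ _ u => stmt12_aux_key P hline ξ η ζ u, ?_⟩
  intro ξ _ η _ ζ _ u
  have hu : (P.e (u : X)) ∈ P.e.target := P.e.map_source u.2
  have hs : P.e.symm (P.e (u : X)) = (u : X) := P.e.left_inv u.2
  simp only [PASetup.lact, PASetup.rank1, hu, if_pos, hs, PASetup.innX, u.2, dif_pos]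
  have hsub : ∀ hm, (⟨P.e.symm (P.e (u : X)), hm⟩ : P.e.source) = u := fun hm => Subtype.ext hs
  rw [hsub]
  exact stmt12_aux_key P hline ζ η ξ u
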